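/- Double factorial identity for i < j (Lemma): for all natural numbers i < j with i + j odd, setting A = (j − i + 1)/2 ∈ ℤ, the following identity holds in ℚ: Σ_{ℓ=0}^{A−1} (−1)^{ℓ+A} / (2^ℓ · ℓ! · (j − i − 2ℓ)!!) + Σ_{ℓ=A}^{⌊j/2⌋} (2ℓ + i − j − 2)!! / (2^ℓ · ℓ!) = (1/(j! · (i − j))) · C, where C = i!!·(j−1)!! if i is odd and C = (i−1)!!·j!! if i is even (the second sum is empty when A > ⌊j/2⌋; note i − j < 0, and 2ℓ + i − j − 2 ≥ −1 for ℓ ≥ A, using (−1)!! = 1). -/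

import Mathlib

/-- The double factorial `n!! = n(n-2)(n-4)⋯`, with `0!! = 1!! = 1`. -/
def dfact : ℕ → ℕ
  | 0 => 1
  | 1 => 1
  | (n + 2) => (n + 2) * dfact n

/-- The double factorial extended to integers `n ≥ -1` by the convention `(-1)!! = 1`
(via `Int.toNat`, so `dfactZ n = (n.toNat)!!` and `dfactZ (-1) = 1`). -/
def dfactZ (n : ℤ) : ℕ := dfact n.toNat

theorem dfact_pos : ∀ n, 0 < dfact n
  | 0 => Nat.one_pos
  | 1 => Nat.one_pos
  | (n + 2) => Nat.mul_pos (Nat.succ_pos _) (dfact_pos n)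

theorem dfact_cast_ne (n : ℕ) : (dfact n : ℚ) ≠ 0 :=
  Nat.cast_ne_zero.mpr (dfact_pos n).ne'

theorem dfact_odd (k : ℕ) : dfact (2 * k + 1) = (2 * k + 1) * dfact (2 * k - 1) := by
  cases k with
  | zero => simp [dfact]
  | succ k =>
    have h1 : 2 * (k + 1) + 1 = (2 * k + 1) + 2 := by omega
    have h2 : 2 * (k + 1) - 1 = 2 * k + 1 := by omega
    rw [h1, h2]
    rfl

theorem dfact_two_mul (n : ℕ) : dfact (2 * n) = 2 ^ n * n.factorial := by
  induction n with
  | zero => simp [dfact]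
  | succ n ih =>
    have h1 : 2 * (n + 1) = 2 * n + 2 := by omega
    rw [h1]
    show (2 * n + 2) * dfact (2 * n) = _
    rw [ih, Nat.factorial_succ]
    ring

theorem factorial_eq_dfact (n : ℕ) : (n + 1).factorial = dfact (n + 1) * dfact n := by
  induction n with
  | zero => rfl
  | succ n ih =>
    rw [Nat.factorial_succ, ih]
    show (n + 2) * (dfact (n + 1) * dfact n) = (n + 2) * dfact n * dfact (n + 1)
    ring

theorem neg_one_pow_congr_mod2 (a b : ℕ) (h : a % 2 = b % 2) : (-1 : ℚ) ^ a = (-1) ^ b := by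
  conv_lhs => rw [← Nat.div_add_mod a 2]
  conv_rhs => rw [← Nat.div_add_mod b 2]
  rw [h]
  simp [pow_add, pow_mul]

/-- Closed form of the partial sums in the first regime (`m ≤ A`). -/
noncomputable def gAux (A m : ℕ) : ℚ :=
  (-1) ^ (m + A + 1) * (2 * m) * (dfact (2 * A - 3) : ℚ) /
    (2 ^ m * (Nat.factorial m : ℚ) * (dfact (2 * A - 1) : ℚ) * (dfact (2 * A - 1 - 2 * m) : ℚ))

/-- Closed form of the partial sums in the second regime (`m ≥ A`). -/
noncomputable def hAux (A m : ℕ) : ℚ :=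
  -((2 * m : ℚ) * (dfact (2 * A - 3) : ℚ) * (dfact (2 * m - 2 * A - 1) : ℚ)) /
    (2 ^ m * (Nat.factorial m : ℚ) * (dfact (2 * A - 1) : ℚ))

theorem gAux_eq_hAux (A : ℕ) : gAux A A = hAux A A := by
  unfold gAux hAux
  have e1 : 2 * A - 1 - 2 * A = 0 := by omega
  have e2 : 2 * A - 2 * A - 1 = 0 := by omega
  rw [e1, e2]
  have e3 : (-1 : ℚ) ^ (A + A + 1) = -1 := by
    rw [neg_one_pow_congr_mod2 (A + A + 1) 1 (by omega)]; simp
  rw [e3]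
  simp [dfact]

theorem sum_first (A : ℕ) : ∀ m, m ≤ A →
    (∑ l ∈ Finset.range m,
      ((-1 : ℚ) ^ (l + A)) / ((2 : ℚ) ^ l * (Nat.factorial l : ℚ) *
        (dfact (2 * A - 1 - 2 * l) : ℚ))) = gAux A m := by
  intro m
  induction m with
  | zero => intro _; simp [gAux]
  | succ m ih =>
    intro hm
    rw [Finset.sum_range_succ, ih (by omega)]
    obtain ⟨k, rfl⟩ : ∃ k, A = m + k + 1 := ⟨A - m - 1, by omega⟩
    unfold gAux
    have e1 : 2 * (m + k + 1) - 1 - 2 * m = 2 * k + 1 := by omega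
    have e2 : 2 * (m + k + 1) - 1 - 2 * (m + 1) = 2 * k - 1 := by omega
    have e3 : 2 * (m + k + 1) - 1 = 2 * (m + k) + 1 := by omega
    have e4 : 2 * (m + k) - 1 = 2 * (m + k + 1) - 3 := by omega
    rw [e1, e2, e3]
    have s1 : (-1 : ℚ) ^ (m + (m + k + 1) + 1) = (-1) ^ k :=
      neg_one_pow_congr_mod2 _ _ (by omega)
    have s2 : (-1 : ℚ) ^ (m + (m + k + 1)) = (-1) ^ (k + 1) :=
      neg_one_pow_congr_mod2 _ _ (by omega)
    have s3 : (-1 : ℚ) ^ ((m + 1) + (m + k + 1) + 1) = (-1) ^ (k + 1) :=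
      neg_one_pow_congr_mod2 _ _ (by omega)
    rw [s1, s2, s3]
    have d1 : (dfact (2 * (m + k) + 1) : ℚ) =
        (2 * (m + k) + 1 : ℕ) * (dfact (2 * (m + k + 1) - 3) : ℚ) := by
      rw [dfact_odd (m + k), e4]; push_cast; ring
    have d2 : (dfact (2 * k + 1) : ℚ) = (2 * k + 1 : ℕ) * (dfact (2 * k - 1) : ℚ) := by
      rw [dfact_odd k]; push_cast; ring
    rw [d1, d2, Nat.factorial_succ]
    have h1 := dfact_cast_ne (2 * (m + k + 1) - 3)
    have h2 := dfact_cast_ne (2 * k - 1)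
    have h3 : ((Nat.factorial m : ℚ)) ≠ 0 := Nat.cast_ne_zero.mpr (Nat.factorial_ne_zero m)
    have h4 : (2 : ℚ) ^ m ≠ 0 := pow_ne_zero _ two_ne_zero
    have h5 : ((2 * (m + k) + 1 : ℕ) : ℚ) ≠ 0 := by positivity
    have h6 : ((2 * k + 1 : ℕ) : ℚ) ≠ 0 := by positivity
    have h7 : ((m : ℚ) + 1) ≠ 0 := by positivity
    push_cast
    field_simp
    ring

theorem sum_second (A : ℕ) (hA1 : 1 ≤ A) : ∀ n,
    hAux A A + (∑ l ∈ Finset.Icc A (A + n),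
      (dfact (2 * l - 2 * A - 1) : ℚ) / ((2 : ℚ) ^ l * (Nat.factorial l : ℚ)))
      = hAux A (A + n + 1) := by
  obtain ⟨B, rfl⟩ : ∃ B, A = B + 1 := ⟨A - 1, by omega⟩
  intro n
  induction n with
  | zero =>
    simp only [Nat.add_zero, Finset.Icc_self, Finset.sum_singleton]
    unfold hAux
    have e1 : 2 * (B + 1) - 2 * (B + 1) - 1 = 0 := by omega
    have e2 : 2 * (B + 1 + 1) - 2 * (B + 1) - 1 = 1 := by omega
    have e3 : 2 * (B + 1) - 1 = 2 * B + 1 := by omega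
    have e4 : 2 * (B + 1) - 3 = 2 * B - 1 := by omega
    rw [e1, e2, e3, e4]
    have d1 : (dfact (2 * B + 1) : ℚ) = (2 * (B : ℚ) + 1) * (dfact (2 * B - 1) : ℚ) := by
      rw [dfact_odd B]; push_cast; ring
    rw [d1]
    rw [show Nat.factorial (B + 1 + 1) = (B + 1 + 1) * Nat.factorial (B + 1)
      from Nat.factorial_succ _]
    have h1 := dfact_cast_ne (2 * B - 1)
    have h3 : ((Nat.factorial (B + 1) : ℚ)) ≠ 0 :=
      Nat.cast_ne_zero.mpr (Nat.factorial_ne_zero _)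
    have h4 : (2 : ℚ) ^ (B + 1) ≠ 0 := pow_ne_zero _ two_ne_zero
    have h5 : (2 * (B : ℚ) + 1) ≠ 0 := by positivity
    have h7 : ((B : ℚ) + 1 + 1) ≠ 0 := by positivity
    simp only [dfact]
    push_cast
    field_simp
    ring
  | succ n ih =>
    have e0 : B + 1 + (n + 1) = (B + 1 + n) + 1 := by omega
    rw [e0, Finset.sum_Icc_succ_top (by omega), ← add_assoc, ih]
    unfold hAux
    have e1 : 2 * (B + 1 + n + 1) - 2 * (B + 1) - 1 = 2 * n + 1 := by omega
    have e2 : 2 * (B + 1 + n + 1 + 1) - 2 * (B + 1) - 1 = 2 * (n + 1) + 1 := by omega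
    have e3 : 2 * (B + 1) - 1 = 2 * B + 1 := by omega
    have e4 : 2 * (B + 1) - 3 = 2 * B - 1 := by omega
    rw [e1, e2, e3, e4]
    have d1 : (dfact (2 * B + 1) : ℚ) = (2 * (B : ℚ) + 1) * (dfact (2 * B - 1) : ℚ) := by
      rw [dfact_odd B]; push_cast; ring
    rw [d1]
    have d2 : (dfact (2 * (n + 1) + 1) : ℚ) =
        (2 * ((n : ℚ) + 1) + 1) * (dfact (2 * n + 1) : ℚ) := by
      have h : 2 * (n + 1) + 1 = (2 * n + 1) + 2 := by omega
      rw [h]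
      show ((((2 * n + 1) + 2) * dfact (2 * n + 1) : ℕ) : ℚ) = _
      push_cast; ring
    rw [d2]
    rw [show Nat.factorial (B + 1 + n + 1 + 1) = (B + 1 + n + 1 + 1) * Nat.factorial (B + 1 + n + 1)
      from Nat.factorial_succ _]
    have h1 := dfact_cast_ne (2 * B - 1)
    have h2 := dfact_cast_ne (2 * n + 1)
    have h5 : (2 * (B : ℚ) + 1) ≠ 0 := by positivity
    have h3 : ((Nat.factorial (B + 1 + n + 1) : ℚ)) ≠ 0 :=
      Nat.cast_ne_zero.mpr (Nat.factorial_ne_zero _)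
    have h4 : (2 : ℚ) ^ (B + 1 + n + 1) ≠ 0 := pow_ne_zero _ two_ne_zero
    have h7 : ((B : ℚ) + 1 + n + 1 + 1) ≠ 0 := by positivity
    push_cast
    field_simp
    ring

/-- **Double factorial identity for `i < j`** (Lemma): for `i < j` with `i + j` odd and
`A = (j - i + 1)/2`,
`Σ_{ℓ=0}^{A-1} (-1)^{ℓ+A}/(2^ℓ ℓ! (j-i-2ℓ)!!) + Σ_{ℓ=A}^{⌊j/2⌋} (2ℓ+i-j-2)!!/(2^ℓ ℓ!)
  = C/(j!·(i-j))` with `C = i!!·(j-1)!!` for `i` odd and `C = (i-1)!!·j!!` for `i` even. -/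
theorem double_factorial_identity_lt (i j A : ℕ) (hij : i < j) (hodd : Odd (i + j))
    (hA : A = (j - i + 1) / 2) :
    (∑ l ∈ Finset.range A,
        ((-1 : ℚ) ^ (l + A)) /
          ((2 : ℚ) ^ l * (Nat.factorial l : ℚ) *
            (dfactZ ((j : ℤ) - (i : ℤ) - 2 * (l : ℤ)) : ℚ))) +
      (∑ l ∈ Finset.Icc A (j / 2),
        (dfactZ (2 * (l : ℤ) + (i : ℤ) - (j : ℤ) - 2) : ℚ) /
          ((2 : ℚ) ^ l * (Nat.factorial l : ℚ))) =
    (1 / ((Nat.factorial j : ℚ) * ((i : ℚ) - (j : ℚ)))) *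
      (if Odd i then (dfact i : ℚ) * (dfact (j - 1) : ℚ)
       else (dfact (i - 1) : ℚ) * (dfact j : ℚ)) := by
  obtain ⟨t, ht⟩ := hodd
  have hj : j = i + 2 * A - 1 := by omega
  have hA1 : 1 ≤ A := by omega
  -- rewrite the first sum
  have hs1 : (∑ l ∈ Finset.range A,
      ((-1 : ℚ) ^ (l + A)) / ((2 : ℚ) ^ l * (Nat.factorial l : ℚ) *
        (dfactZ ((j : ℤ) - (i : ℤ) - 2 * (l : ℤ)) : ℚ))) =
      (∑ l ∈ Finset.range A,
      ((-1 : ℚ) ^ (l + A)) / ((2 : ℚ) ^ l * (Nat.factorial l : ℚ) *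
        (dfact (2 * A - 1 - 2 * l) : ℚ))) := by
    apply Finset.sum_congr rfl
    intro l hl
    rw [Finset.mem_range] at hl
    have : dfactZ ((j : ℤ) - (i : ℤ) - 2 * (l : ℤ)) = dfact (2 * A - 1 - 2 * l) := by
      unfold dfactZ
      congr 1
      omega
    rw [this]
  -- rewrite the second sum
  have hs2 : (∑ l ∈ Finset.Icc A (j / 2),
      (dfactZ (2 * (l : ℤ) + (i : ℤ) - (j : ℤ) - 2) : ℚ) /
        ((2 : ℚ) ^ l * (Nat.factorial l : ℚ))) =
      (∑ l ∈ Finset.Icc A (j / 2),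
      (dfact (2 * l - 2 * A - 1) : ℚ) / ((2 : ℚ) ^ l * (Nat.factorial l : ℚ))) := by
    apply Finset.sum_congr rfl
    intro l hl
    rw [Finset.mem_Icc] at hl
    have : dfactZ (2 * (l : ℤ) + (i : ℤ) - (j : ℤ) - 2) = dfact (2 * l - 2 * A - 1) := by
      unfold dfactZ
      congr 1
      omega
    rw [this]
  rw [hs1, hs2, sum_first A A le_rfl, gAux_eq_hAux]
  -- combine into hAux A (j/2 + 1)
  have hcomb : hAux A A + (∑ l ∈ Finset.Icc A (j / 2),
      (dfact (2 * l - 2 * A - 1) : ℚ) / ((2 : ℚ) ^ l * (Nat.factorial l : ℚ)))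
      = hAux A (j / 2 + 1) := by
    rcases lt_or_ge (j / 2) A with h | h
    · have hje : j / 2 = A - 1 := by omega
      have : Finset.Icc A (j / 2) = ∅ := by
        apply Finset.Icc_eq_empty
        omega
      rw [this, Finset.sum_empty, add_zero]
      have : j / 2 + 1 = A := by omega
      rw [this]
    · obtain ⟨n, hn⟩ : ∃ n, j / 2 = A + n := ⟨j / 2 - A, by omega⟩
      rw [hn, sum_second A hA1 n]
  rw [hcomb]
  -- final evaluation
  obtain ⟨B, rfl⟩ : ∃ B, A = B + 1 := ⟨A - 1, by omega⟩
  set M := j / 2 with hM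
  unfold hAux
  have e3 : 2 * (B + 1) - 1 = 2 * B + 1 := by omega
  have e4 : 2 * (B + 1) - 3 = 2 * B - 1 := by omega
  rw [e3, e4]
  have hD1 : (dfact (2 * B + 1) : ℚ) = (2 * (B : ℚ) + 1) * (dfact (2 * B - 1) : ℚ) := by
    rw [dfact_odd B]; push_cast; ring
  have hij' : ((i : ℚ) - (j : ℚ)) = -(2 * (B : ℚ) + 1) := by
    have hj' : j = i + (2 * B + 1) := by omega
    have hc : (j : ℚ) = (i : ℚ) + (2 * (B : ℚ) + 1) := by
      rw [hj']; push_cast; ring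
    rw [hc]; ring
  have h2B1 : (2 * (B : ℚ) + 1) ≠ 0 := by positivity
  have hD3 := dfact_cast_ne (2 * B - 1)
  have hMf : ((Nat.factorial M : ℚ)) ≠ 0 := Nat.cast_ne_zero.mpr (Nat.factorial_ne_zero M)
  have h2M : (2 : ℚ) ^ M ≠ 0 := pow_ne_zero _ two_ne_zero
  by_cases hi : Odd i
  · rw [if_pos hi]
    have hj2M : j = 2 * M := by
      obtain ⟨s, hs⟩ := hi
      omega
    have hfj : (Nat.factorial j : ℚ) = 2 ^ M * (Nat.factorial M : ℚ) * (dfact (j - 1) : ℚ) := by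
      have hj1 : j = (j - 1) + 1 := by omega
      rw [hj1, factorial_eq_dfact (j - 1), ← hj1, hj2M, dfact_two_mul]
      push_cast; ring
    have hieq : 2 * (M + 1) - 2 * (B + 1) - 1 = i := by omega
    rw [hieq]
    have hb : ((2 : ℚ) ^ (M + 1) * (Nat.factorial (M + 1) : ℚ) * (dfact (2 * B + 1) : ℚ)) ≠ 0 :=
      mul_ne_zero (mul_ne_zero (pow_ne_zero _ two_ne_zero)
        (Nat.cast_ne_zero.mpr (Nat.factorial_ne_zero _))) (dfact_cast_ne _)
    have hc : ((Nat.factorial j : ℚ) * ((i : ℚ) - (j : ℚ))) ≠ 0 := by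
      rw [hij']
      exact mul_ne_zero (Nat.cast_ne_zero.mpr (Nat.factorial_ne_zero _)) (neg_ne_zero.mpr h2B1)
    rw [one_div_mul_eq_div, div_eq_div_iff hb hc, hfj, hij', hD1]
    rw [show Nat.factorial (M + 1) = (M + 1) * Nat.factorial M from Nat.factorial_succ M]
    push_cast
    ring
  · rw [if_neg hi]
    have hj2M : j = 2 * M + 1 := by
      rcases Nat.even_or_odd i with he | ho
      · obtain ⟨s, hs⟩ := he
        omega
      · exact absurd ho hi
    have hfj : (Nat.factorial j : ℚ) = (dfact j : ℚ) * (2 ^ M * (Nat.factorial M : ℚ)) := by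
      have hj1 : j = (j - 1) + 1 := by omega
      rw [hj1, factorial_eq_dfact (j - 1), ← hj1]
      have h : j - 1 = 2 * M := by omega
      rw [h, dfact_two_mul]
      push_cast; ring
    have hieq : 2 * (M + 1) - 2 * (B + 1) - 1 = i - 1 := by omega
    rw [hieq]
    have hb : ((2 : ℚ) ^ (M + 1) * (Nat.factorial (M + 1) : ℚ) * (dfact (2 * B + 1) : ℚ)) ≠ 0 :=
      mul_ne_zero (mul_ne_zero (pow_ne_zero _ two_ne_zero)
        (Nat.cast_ne_zero.mpr (Nat.factorial_ne_zero _))) (dfact_cast_ne _)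
    have hc : ((Nat.factorial j : ℚ) * ((i : ℚ) - (j : ℚ))) ≠ 0 := by
      rw [hij']
      exact mul_ne_zero (Nat.cast_ne_zero.mpr (Nat.factorial_ne_zero _)) (neg_ne_zero.mpr h2B1)
    rw [one_div_mul_eq_div, div_eq_div_iff hb hc, hfj, hij', hD1]
    rw [show Nat.factorial (M + 1) = (M + 1) * Nat.factorial M from Nat.factorial_succ M]
    push_cast
    ring
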